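/- Let s, r ≥ 0 and d ≥ 1 be integers with s + r + d ≥ 2, and let X ∈ E(s,r,d). If a nontrivial affine map T(w) = a·w + b leaves X invariant, then a ≠ 1 and a is a primitive k-th root of unity for some integer k ≥ 2 with k | d and k | (s − r − 1); moreover T is the rotation of order k about the point C = b/(1 − a), i.e. T(C) = C and T(w) = a·(w − C) + C. -/

import Mathlib

/-! Write `T w = a w + b`. The invariance says `A · exp F = B` for the polynomials
`A = (Q ∘ T) · P`, `B = a · Q · (P ∘ T)` and `F = E ∘ T - E`. Differentiating gives
`A · B · F' = W(A, B)`, and the Wronskian has degree below `deg A + deg B`, so `F` is a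
constant `c` and `e^c · (Q ∘ T) · P = a · Q · (P ∘ T)`.

If `a = 1`, then `b ≠ 0`; `E'` is `b`-periodic and, by coprimality, `Q ∣ Q ∘ T` and
`P ∣ P ∘ T`, so `E'`, `Q`, `P` are `b`-periodic, hence constant, forcing `s + r + d ≤ 1`.
If `a ≠ 1`, evaluating `F` at the fixed point of `T` gives `c = 0`, and comparing leading
coefficients in `E ∘ T = E` and in the identity above gives `a ^ d = 1` and
`a ^ s = a ^ (r + 1)`; `k` is the order of `a`. -/

open Polynomial

noncomputable section

/-- The data `(λ, Q, P, E)` of an element `X ∈ E(s,r,d)`: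
`λ ≠ 0`, `Q`, `P` monic of degrees `s`, `r` with no common roots,
and `deg E = d`. -/
def EData (s r d : ℕ) (lam : ℂ) (Q P E : Polynomial ℂ) : Prop :=
  lam ≠ 0 ∧ Q.Monic ∧ P.Monic ∧ Q.natDegree = s ∧ P.natDegree = r ∧
    E.natDegree = d ∧ ∀ z : ℂ, ¬ (Q.IsRoot z ∧ P.IsRoot z)

/-- The affine map `T(w) = a·w + b` leaves the vector field with data `(λ,Q,P,E)`
invariant: `Q(aw+b)·P(w)·exp(E(aw+b)) = a·Q(w)·P(aw+b)·exp(E(w))` for all `w`. -/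
def LeavesInv (Q P E : Polynomial ℂ) (a b : ℂ) : Prop :=
  ∀ w : ℂ,
    Q.eval (a * w + b) * P.eval w * Complex.exp (E.eval (a * w + b)) =
      a * Q.eval w * P.eval (a * w + b) * Complex.exp (E.eval w)

namespace Polynomial

section Translation

variable {R : Type*} [CommRing R] [IsDomain R] [CharZero R] {b : R}

theorem natDegree_eq_zero_of_comp_X_add_C_eq {p : R[X]} (hb : b ≠ 0)
    (h : p.comp (X + C b) = p) : p.natDegree = 0 := by
  have hper : Function.Periodic p.eval b := fun w => by
    simpa using congrArg (eval w) h
  have hinj : Function.Injective fun n : ℕ => (n : R) * b := fun m n hmn =>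
    Nat.cast_injective (mul_right_cancel₀ hb hmn)
  have hconst : p - C (p.eval 0) = 0 :=
    eq_zero_of_infinite_isRoot _ <| Set.infinite_of_injective_forall_mem hinj fun n => by
      simp [hper.nat_mul_eq n]
  rw [sub_eq_zero.mp hconst, natDegree_C]

theorem natDegree_le_one_of_comp_X_add_C_sub_eq_C {p : R[X]} {c : R} (hb : b ≠ 0)
    (h : p.comp (X + C b) - p = C c) : p.natDegree ≤ 1 := by
  have hder : (derivative p).comp (X + C b) = derivative p := by
    simpa [derivative_comp, sub_eq_zero] using congrArg derivative h
  have := natDegree_eq_zero_of_comp_X_add_C_eq hb hder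
  rw [natDegree_derivative] at this
  omega

theorem Monic.natDegree_eq_zero_of_dvd_comp_X_add_C {p : R[X]} (hp : p.Monic) (hb : b ≠ 0)
    (h : p ∣ p.comp (X + C b)) : p.natDegree = 0 :=
  natDegree_eq_zero_of_comp_X_add_C_eq hb <|
    eq_of_monic_of_dvd_of_natDegree_le hp (hp.comp_X_add_C b) h (by simp [natDegree_comp])

theorem natDegree_eq_zero_of_comp_X_add_C_mul_eq {p q : R[X]} (hp : p.Monic) (hq : q.Monic)
    (hpq : IsCoprime p q) (hb : b ≠ 0) (h : p.comp (X + C b) * q = p * q.comp (X + C b)) :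
    p.natDegree = 0 ∧ q.natDegree = 0 :=
  ⟨hp.natDegree_eq_zero_of_dvd_comp_X_add_C hb <|
      hpq.dvd_of_dvd_mul_right ⟨q.comp (X + C b), h⟩,
    hq.natDegree_eq_zero_of_dvd_comp_X_add_C hb <|
      hpq.symm.dvd_of_dvd_mul_left ⟨p.comp (X + C b), by rw [← h, mul_comm]⟩⟩

end Translation

section Affine

variable {R : Type*} [CommRing R] [IsDomain R] {a b : R}

theorem leadingCoeff_comp_C_mul_X_add_C (p : R[X]) (ha : a ≠ 0) :
    (p.comp (C a * X + C b)).leadingCoeff = p.leadingCoeff * a ^ p.natDegree := by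
  rw [leadingCoeff_comp (by rw [natDegree_linear ha]; exact one_ne_zero), leadingCoeff_linear ha]

theorem comp_C_mul_X_add_C_ne_zero {p : R[X]} (hp : p ≠ 0) (ha : a ≠ 0) :
    p.comp (C a * X + C b) ≠ 0 := by
  rw [← leadingCoeff_ne_zero, leadingCoeff_comp_C_mul_X_add_C p ha]
  exact mul_ne_zero (leadingCoeff_ne_zero.mpr hp) (pow_ne_zero _ ha)

theorem pow_natDegree_eq_one_of_comp_eq {p : R[X]} (ha : a ≠ 0)
    (h : p.comp (C a * X + C b) = p) : a ^ p.natDegree = 1 := by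
  rcases eq_or_ne p 0 with rfl | hp
  · simp
  have := congrArg leadingCoeff h
  rw [leadingCoeff_comp_C_mul_X_add_C p ha] at this
  exact (mul_right_eq_self₀.mp this).resolve_right (leadingCoeff_ne_zero.mpr hp)

end Affine

theorem eq_zero_of_mul_mul_eq_wronskian {R : Type*} [CommRing R] [IsDomain R] {A B G : R[X]}
    (hA : A ≠ 0) (hB : B ≠ 0) (h : A * B * G = wronskian A B) : G = 0 := by
  by_contra hG
  have hlt := degree_wronskian_lt_add hA hB
  rw [← h, degree_mul, degree_mul] at hlt
  have : (0 : WithBot ℕ) ≤ G.degree := zero_le_degree_iff.mpr hG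
  exact lt_irrefl _ (lt_of_le_of_lt (le_add_of_nonneg_right this) hlt)

theorem derivative_add_mul_derivative_mul_eq {A B F : ℂ[X]}
    (h : ∀ w, A.eval w * Complex.exp (F.eval w) = B.eval w) :
    (derivative A + A * derivative F) * B = A * derivative B := by
  refine Polynomial.funext fun w => ?_
  have hB : HasDerivAt (fun x => B.eval x)
      (A.derivative.eval w * Complex.exp (F.eval w) +
        A.eval w * (Complex.exp (F.eval w) * F.derivative.eval w)) w := by
    rw [← _root_.funext h]
    exact (A.hasDerivAt w).mul (F.hasDerivAt w).cexp
  simp only [eval_mul, eval_add, (B.hasDerivAt w).unique hB, ← h w]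
  ring

theorem exists_eq_C_of_eval_mul_cexp_eq {A B F : ℂ[X]} (hA : A ≠ 0) (hB : B ≠ 0)
    (h : ∀ w, A.eval w * Complex.exp (F.eval w) = B.eval w) :
    ∃ c, F = C c ∧ C (Complex.exp c) * A = B := by
  have hF : derivative F = 0 := eq_zero_of_mul_mul_eq_wronskian hA hB <| by
    rw [wronskian]
    linear_combination derivative_add_mul_derivative_mul_eq h
  have hFc := eq_C_of_derivative_eq_zero hF
  refine ⟨F.coeff 0, hFc, Polynomial.funext fun w => ?_⟩
  rw [← h w, hFc]
  simp [mul_comm]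

theorem isCoprime_of_forall_not_isRoot {K : Type*} [Field K] [IsAlgClosed K] {p q : K[X]}
    (h : ∀ z, ¬(p.IsRoot z ∧ q.IsRoot z)) : IsCoprime p q :=
  (isCoprime_iff_aeval_ne_zero_of_isAlgClosed K K p q).mpr fun z => by
    simpa [imp_iff_not_or] using h z

end Polynomial

theorem exists_isPrimitiveRoot_dvd_of_pow_eq {M : Type*} [CommMonoid M] {a : M} {d s r : ℕ}
    (hd : 0 < d) (ha : a ≠ 1) (had : a ^ d = 1) (hsr : a ^ s = a ^ (r + 1)) :
    ∃ k : ℕ, 2 ≤ k ∧ IsPrimitiveRoot a k ∧ (k : ℤ) ∣ d ∧ (k : ℤ) ∣ (s : ℤ) - r - 1 := by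
  have hkd : orderOf a ∣ d := orderOf_dvd_of_pow_eq_one had
  have hk0 : 0 < orderOf a := Nat.pos_of_dvd_of_pos hkd hd
  have hk1 : orderOf a ≠ 1 := fun h => ha (orderOf_eq_one_iff.mp h)
  have hsr' : r + 1 ≡ s [MOD orderOf a] :=
    (isOfFinOrder_iff_pow_eq_one.mpr ⟨d, hd, had⟩).pow_eq_pow_iff_modEq.mp hsr.symm
  refine ⟨orderOf a, by omega, IsPrimitiveRoot.orderOf a, Int.natCast_dvd_natCast.mpr hkd, ?_⟩
  simpa [sub_sub] using Nat.modEq_iff_dvd.mp hsr'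

theorem LeavesInv.exists_comp_sub_eq_C {Q P E : ℂ[X]} {a b : ℂ} (hinv : LeavesInv Q P E a b)
    (ha : a ≠ 0) (hQ : Q ≠ 0) (hP : P ≠ 0) :
    ∃ c, E.comp (C a * X + C b) - E = C c ∧
      C (Complex.exp c) * (Q.comp (C a * X + C b) * P) = C a * (Q * P.comp (C a * X + C b)) :=
  exists_eq_C_of_eval_mul_cexp_eq (mul_ne_zero (comp_C_mul_X_add_C_ne_zero hQ ha) hP)
    (mul_ne_zero (C_ne_zero.mpr ha) (mul_ne_zero hQ (comp_C_mul_X_add_C_ne_zero hP ha)))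
    fun w => by
      simp only [eval_mul, eval_sub, eval_comp, eval_add, eval_C, eval_X, Complex.exp_sub]
      field_simp
      linear_combination hinv w

/-- if a nontrivial affine map `T(w) = a·w + b` leaves
`X ∈ E(s,r,d)` invariant, then `a ≠ 1`, `a` is a primitive `k`-th root of
unity for some `k ≥ 2` with `k ∣ d` and `k ∣ (s−r−1)`, and `T` is the
rotation of order `k` about `C = b/(1−a)`. -/
theorem stmt2 (s r d : ℕ) (hd : 1 ≤ d) (h2 : 2 ≤ s + r + d)
    (lam : ℂ) (Q P E : Polynomial ℂ) (hX : EData s r d lam Q P E)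
    (a b : ℂ) (ha : a ≠ 0) (hnt : (a, b) ≠ (1, 0))
    (hinv : LeavesInv Q P E a b) :
    a ≠ 1 ∧
    ∃ k : ℕ, 2 ≤ k ∧ IsPrimitiveRoot a k ∧
      (k : ℤ) ∣ (d : ℤ) ∧ (k : ℤ) ∣ ((s : ℤ) - r - 1) ∧
      a * (b / (1 - a)) + b = b / (1 - a) ∧
      ∀ w : ℂ, a * w + b = a * (w - b / (1 - a)) + b / (1 - a) := by
  obtain ⟨-, hQ, hP, rfl, rfl, rfl, hnoc⟩ := hX
  obtain ⟨c, hE, hQP⟩ := hinv.exists_comp_sub_eq_C ha hQ.ne_zero hP.ne_zero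
  have hlead : Complex.exp c * a ^ Q.natDegree = a ^ (P.natDegree + 1) := by
    have h := congrArg leadingCoeff hQP
    simp only [leadingCoeff_mul, leadingCoeff_C, leadingCoeff_comp_C_mul_X_add_C _ ha,
      hQ.leadingCoeff, hP.leadingCoeff, one_mul, mul_one] at h
    rwa [pow_succ']
  have ha1 : a ≠ 1 := by
    rintro rfl
    have hb : b ≠ 0 := by rintro rfl; exact hnt rfl
    obtain ⟨hs, hr⟩ := natDegree_eq_zero_of_comp_X_add_C_mul_eq hQ hP
      (isCoprime_of_forall_not_isRoot hnoc) hb <| by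
        simpa [show Complex.exp c = 1 by simpa using hlead] using hQP
    have := natDegree_le_one_of_comp_X_add_C_sub_eq_C hb (by simpa using hE)
    omega
  have hfix : a * (b / (1 - a)) + b = b / (1 - a) := by
    field_simp [sub_ne_zero.mpr ha1.symm]
    ring
  obtain rfl : c = 0 := by simpa [hfix] using (congrArg (eval (b / (1 - a))) hE).symm
  obtain ⟨k, hk2, hprim, hkd, hksr⟩ := exists_isPrimitiveRoot_dvd_of_pow_eq hd ha1
    (pow_natDegree_eq_one_of_comp_eq ha (by simpa [sub_eq_zero] using hE)) (by simpa using hlead)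
  exact ⟨ha1, k, hk2, hprim, hkd, hksr, hfix, fun w => by linear_combination hfix⟩
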